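/- If a filtered vector space (V, ℓ) over a field κ satisfies the best approximation property, then every subspace W of V has an ℓ-orthogonal complement. -/

import Mathlib

universe u v

/-- `ℓ` is a filtration function making `(V, ℓ)` a filtered vector space over `κ`. -/
def IsFiltrationFn (κ : Type u) [Field κ] {V : Type v} [AddCommGroup V] [Module κ V]
    (ℓ : V → WithBot ℝ) : Prop :=
  (∀ v : V, ℓ v = ⊥ ↔ v = 0) ∧
    (∀ (c : κ) (v : V), c ≠ 0 → ℓ (c • v) = ℓ v) ∧
      ∀ v w : V, ℓ (v + w) ≤ max (ℓ v) (ℓ w)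

/-- The best approximation property of a filtered vector space `(V, ℓ)`. -/
def HasBestApprox (κ : Type u) [Field κ] {V : Type v} [AddCommGroup V] [Module κ V]
    (ℓ : V → WithBot ℝ) : Prop :=
  ∀ (W : Submodule κ V) (v : V), v ∉ W → ∃ w₀ ∈ W, ∀ w ∈ W, ℓ (v - w₀) ≤ ℓ (v - w)

/-!
By Zorn's lemma there is a subspace `X` maximal among those `ℓ`-orthogonal to `W`; orthogonality
alone forces `W ∩ X = 0`. If `W + X` were proper, best approximation would give a vector `x₀ ∉ W + X`
with `ℓ x₀ ≤ ℓ (x₀ + u)` for all `u ∈ W + X`; such a vector is orthogonal to `W + X`, so `X + κ x₀`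
is still orthogonal to `W`, contradicting maximality.
-/

section

variable {κ : Type u} [Field κ] {V : Type v} [AddCommGroup V] [Module κ V] {ℓ : V → WithBot ℝ}

def IsLOrthogonal (ℓ : V → WithBot ℝ) (W X : Submodule κ V) : Prop :=
  ∀ w ∈ W, ∀ x ∈ X, ℓ (w + x) = max (ℓ w) (ℓ x)

namespace IsFiltrationFn

variable (hℓ : IsFiltrationFn κ ℓ)
include hℓ

theorem map_zero : ℓ 0 = ⊥ :=
  (hℓ.1 0).2 rfl

theorem map_neg (v : V) : ℓ (-v) = ℓ v := by
  simpa using hℓ.2.1 (-1) v (by norm_num)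

theorem map_add_eq_max_of_le {u y : V} (h : ℓ y ≤ ℓ (u + y)) :
    ℓ (u + y) = max (ℓ u) (ℓ y) := by
  refine le_antisymm (hℓ.2.2 u y) (max_le ?_ h)
  calc ℓ u = ℓ (u + y + -y) := by rw [add_neg_cancel_right]
    _ ≤ max (ℓ (u + y)) (ℓ (-y)) := hℓ.2.2 _ _
    _ = ℓ (u + y) := by rw [hℓ.map_neg, max_eq_left h]

theorem isLOrthogonal_span_singleton {U : Submodule κ V} {x₀ : V}
    (hmin : ∀ u ∈ U, ℓ x₀ ≤ ℓ (x₀ + u)) : IsLOrthogonal ℓ U (κ ∙ x₀) := by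
  intro u hu y hy
  obtain ⟨c, rfl⟩ := Submodule.mem_span_singleton.1 hy
  refine hℓ.map_add_eq_max_of_le ?_
  rcases eq_or_ne c 0 with rfl | hc
  · simp [hℓ.map_zero]
  have hrescale : u + c • x₀ = c • (x₀ + c⁻¹ • u) := by
    rw [smul_add, smul_inv_smul₀ hc, add_comm]
  rw [hrescale, hℓ.2.1 c _ hc, hℓ.2.1 c _ hc]
  exact hmin _ (U.smul_mem _ hu)

theorem isLOrthogonal_bot (W : Submodule κ V) : IsLOrthogonal ℓ W ⊥ := by
  intro w _ x hx
  rw [(Submodule.mem_bot κ).1 hx, add_zero, hℓ.map_zero, max_bot_right]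

theorem disjoint_of_isLOrthogonal {W X : Submodule κ V} (h : IsLOrthogonal ℓ W X) :
    Disjoint W X := by
  refine Submodule.disjoint_def.2 fun v hvW hvX => (hℓ.1 v).1 ?_
  have hsum := h v hvW (-v) (X.neg_mem hvX)
  rw [add_neg_cancel, hℓ.map_zero, hℓ.map_neg, max_self] at hsum
  exact hsum.symm

end IsFiltrationFn

theorem HasBestApprox.exists_notMem_forall_le {U : Submodule κ V} (hba : HasBestApprox κ ℓ)
    (hU : U ≠ ⊤) : ∃ x₀ ∉ U, ∀ u ∈ U, ℓ x₀ ≤ ℓ (x₀ + u) := by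
  obtain ⟨v, hv⟩ := SetLike.exists_not_mem_of_ne_top U hU
  obtain ⟨u₀, hu₀, hmin⟩ := hba U v hv
  refine ⟨v - u₀, fun h => hv (by simpa using U.add_mem h hu₀), fun u hu => ?_⟩
  simpa [sub_sub_eq_add_sub, sub_add_eq_add_sub] using hmin (u₀ - u) (U.sub_mem hu₀ hu)

namespace IsLOrthogonal

variable {W X Y : Submodule κ V}

theorem sup (hX : IsLOrthogonal ℓ W X) (hY : IsLOrthogonal ℓ (W ⊔ X) Y) :
    IsLOrthogonal ℓ W (X ⊔ Y) := by
  intro w hw z hz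
  obtain ⟨x, hx, y, hy, rfl⟩ := Submodule.mem_sup.1 hz
  rw [← add_assoc, hY _ (Submodule.add_mem_sup hw hx) y hy, hX w hw x hx,
    hY x (Submodule.mem_sup_right hx) y hy, max_assoc]

theorem sSup_of_directedOn {c : Set (Submodule κ V)} (hne : c.Nonempty)
    (hdir : DirectedOn (· ≤ ·) c) (hc : ∀ X ∈ c, IsLOrthogonal ℓ W X) :
    IsLOrthogonal ℓ W (sSup c) := by
  intro w hw x hx
  obtain ⟨X, hXc, hxX⟩ := (Submodule.mem_sSup_of_directed hne hdir).1 hx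
  exact hc X hXc w hw x hxX

end IsLOrthogonal

end

/-- If `(V, ℓ)` satisfies the best approximation property then every subspace `W` of `V`
has an `ℓ`-orthogonal complement: a subspace `X` with `V = W ⊕ X` (internally) such that
`ℓ (w + x) = max (ℓ w) (ℓ x)` for all `w ∈ W`, `x ∈ X`. -/
theorem exists_orthogonal_complement (κ : Type u) [Field κ] {V : Type v}
    [AddCommGroup V] [Module κ V] (ℓ : V → WithBot ℝ) (hℓ : IsFiltrationFn κ ℓ)
    (hba : HasBestApprox κ ℓ) (W : Submodule κ V) :
    ∃ X : Submodule κ V, IsCompl W X ∧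
      ∀ w ∈ W, ∀ x ∈ X, ℓ (w + x) = max (ℓ w) (ℓ x) := by
  obtain ⟨X, -, hX, hXmax⟩ := zorn_le_nonempty₀ {X | IsLOrthogonal ℓ W X}
    (fun c hcS hc y hy => ⟨sSup c, .sSup_of_directedOn ⟨y, hy⟩ hc.directedOn hcS,
      fun _ => le_sSup⟩) ⊥ (hℓ.isLOrthogonal_bot W)
  refine ⟨X, ⟨hℓ.disjoint_of_isLOrthogonal hX, codisjoint_iff.2 ?_⟩, hX⟩
  by_contra hWX
  obtain ⟨x₀, hx₀, hmin⟩ := hba.exists_notMem_forall_le hWX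
  have hXx₀ : IsLOrthogonal ℓ W (X ⊔ κ ∙ x₀) := hX.sup (hℓ.isLOrthogonal_span_singleton hmin)
  have hx₀X : x₀ ∈ X :=
    hXmax hXx₀ le_sup_left (Submodule.mem_sup_right (Submodule.mem_span_singleton_self x₀))
  exact hx₀ (Submodule.mem_sup_right hx₀X)
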